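/- Let s : ℕ → ℤ, m ∈ ℕ, d ≥ 1 real, and suppose n' > n ≥ m with s^m_{n'} = ⌊F^{n'−m}(d)⌋ (as in the truncation construction). Then sup_{k ≥ 1} F^{-k}(|s^m_{n+k}|) > d − 1. -/

import Mathlib

/-!
Take `k = n' - n` and `X = F^{n'-m}(d)`, so that `|s^m_{n'}| = ⌊X⌋ > X - 1`. For `x ≥ 1`,
`log (x + 1) ≤ log x + 1`, so `F^{-1}` maps `x - 1 < y` to `F^{-1}(x) - 1 < F^{-1}(y)`; along the
iterates of `X` we have `F^{-i}(X) = F^{n'-m-i}(d) ≥ d ≥ 1`, hence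
`F^{-k}(⌊X⌋) > F^{-k}(X) - 1 = F^{n-m}(d) - 1 ≥ d - 1`.
-/

open Real

local notation "F" => fun x : ℝ => exp x - 1

local notation "G" => fun x : ℝ => log (x + 1)

lemma le_iterate_exp_sub_one (j : ℕ) (d : ℝ) : d ≤ F^[j] d :=
  Function.id_le_iterate_of_id_le (fun t => by simp only [id]; linarith [add_one_le_exp t]) j d

lemma iterate_log_add_one_iterate_exp_sub_one {i j : ℕ} (hij : i ≤ j) (d : ℝ) :
    G^[i] (F^[j] d) = F^[j - i] d := by
  have hinv : Function.LeftInverse G F := fun x => by simp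
  rw [← Nat.add_sub_cancel' hij, Function.iterate_add_apply, hinv.iterate i, Nat.add_sub_cancel_left]

lemma log_add_one_le_log_add_one {x : ℝ} (hx : 1 ≤ x) : log (x + 1) ≤ log x + 1 := by
  have h2 : (2 : ℝ) ≤ exp 1 := by linarith [add_one_le_exp 1]
  calc log (x + 1) ≤ log (exp 1 * x) := log_le_log (by linarith) (by nlinarith)
    _ = log x + 1 := by rw [log_mul (exp_pos 1).ne' (by linarith), log_exp, add_comm]

lemma log_add_one_sub_one_lt_log_add_one {x y : ℝ} (hx : 1 ≤ x) (hxy : x - 1 < y) :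
    log (x + 1) - 1 < log (y + 1) := by
  have := log_lt_log (by linarith) (show x < y + 1 by linarith)
  linarith [log_add_one_le_log_add_one hx]

lemma iterate_log_add_one_sub_one_lt {x y : ℝ} (hxy : x - 1 < y) (k : ℕ)
    (hx : ∀ i < k, 1 ≤ G^[i] x) : G^[k] x - 1 < G^[k] y := by
  induction k with
  | zero => simpa using hxy
  | succ k ih =>
    simp only [Function.iterate_succ_apply']
    exact log_add_one_sub_one_lt_log_add_one (hx k k.lt_succ_self)
      (ih fun i hi => hx i (hi.trans k.lt_succ_self))

lemma sub_one_lt_iterate_log_add_one_floor {d : ℝ} (hd : 1 ≤ d) {k j : ℕ} (hkj : k ≤ j) :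
    d - 1 < G^[k] ((|⌊F^[j] d⌋| : ℤ) : ℝ) := by
  have hX : 1 ≤ F^[j] d := hd.trans (le_iterate_exp_sub_one j d)
  have hfloor : (0 : ℤ) ≤ ⌊F^[j] d⌋ := Int.floor_nonneg.mpr (by linarith)
  rw [abs_of_nonneg hfloor]
  have hlt := iterate_log_add_one_sub_one_lt (Int.sub_one_lt_floor (F^[j] d)) k fun i hi => by
    rw [iterate_log_add_one_iterate_exp_sub_one (hi.le.trans hkj)]
    exact hd.trans (le_iterate_exp_sub_one _ d)
  rw [iterate_log_add_one_iterate_exp_sub_one hkj] at hlt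
  linarith [le_iterate_exp_sub_one (j - k) d]

theorem truncated_sequence_sup_gt_general (m : ℕ) (d : ℝ) (hd : 1 ≤ d)
    (sm : ℕ → ℤ)
    (n n' : ℕ) (hmn : m ≤ n) (hnn' : n < n')
    (hval : sm n' = ⌊(fun x : ℝ => Real.exp x - 1)^[n' - m] d⌋) :
    ∃ k ≥ 1, d - 1 < (fun x : ℝ => Real.log (x + 1))^[k] ((|sm (n + k)| : ℤ) : ℝ) := by
  refine ⟨n' - n, by omega, ?_⟩
  rw [Nat.add_sub_cancel' hnn'.le, hval]
  exact sub_one_lt_iterate_log_add_one_floor hd (by omega)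

/-- With the truncated sequence `s^m_n = s_n` for `n ≤ m`,
`s^m_n = min(|s_n|, ⌊F^{n-m}(d)⌋)` for `n > m` (where `F(t) = e^t - 1`),
if `n' > n ≥ m` and `s^m_{n'} = ⌊F^{n'-m}(d)⌋`, then
`sup_{k ≥ 1} F^{-k}(|s^m_{n+k}|) > d - 1`, witnessed by some `k ≥ 1`. -/
theorem truncated_sequence_sup_gt (s : ℕ → ℤ) (m : ℕ) (d : ℝ) (hd : 1 ≤ d)
    (sm : ℕ → ℤ)
    (hsm : ∀ n, sm n = if n ≤ m then s n
      else min |s n| ⌊(fun x : ℝ => Real.exp x - 1)^[n - m] d⌋)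
    (n n' : ℕ) (hmn : m ≤ n) (hnn' : n < n')
    (hval : sm n' = ⌊(fun x : ℝ => Real.exp x - 1)^[n' - m] d⌋) :
    ∃ k ≥ 1, d - 1 < (fun x : ℝ => Real.log (x + 1))^[k] ((|sm (n + k)| : ℤ) : ℝ) :=
  truncated_sequence_sup_gt_general m d hd sm n n' hmn hnn' hval
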